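/- Suppose g ∈ C¹(ℝ∖{x₀}) ∩ C(ℝ) is supported in [x₀ − R, x₀ + R] with 0 < R ≤ 1 and satisfies |g^{(k)}(x)| ≤ ⟦g⟧₁ |x − x₀|^{γ−k} χ_R(x − x₀) for k = 0, 1 and x ≠ x₀, for some γ > 0. Then for every real s, |𝔄(g; s)| ≤ C |s|^{κ/2} R^{γ/2} ⟦g⟧₁, where κ = min{1, γ} and C depends only on γ. -/

import Mathlib

/-!
Off `x₀` the derivative satisfies `|g'(x)| ≤ M |x - x₀|^(κ-1)`, so on each side of `x₀` the
increments of `g` are dominated by those of `(M/κ) |x - x₀|^κ`; by subadditivity of `t ↦ t^κ`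
this makes `g` `κ`-Hölder with constant `2M/κ`. Since also `|g| ≤ M R^γ`, the geometric mean of
the two bounds makes `g` `κ/2`-Hölder with constant `(2M/κ) R^(γ/2)`. Splitting the integrand of
`𝔄(g; s)` as `(g(st) - g(0))/t + (g(st) - g(s))/(1-t)` then bounds it by a multiple of
`|s|^(κ/2) (t^(κ/2-1) + (1-t)^(κ/2-1))`, whose integral over `(0, 1)` is `4/κ`.
-/

open Set MeasureTheory Filter

noncomputable section

/-- The coefficient `𝔄(g; s) = (2π)⁻² ∫₀¹ [g(st) - (1-t)g(0) - t g(s)] / (t(1-t)) dt`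
for a real-valued function `g` and real `s`. -/
noncomputable def couA (g : ℝ → ℝ) (s : ℝ) : ℝ :=
  ((2 * Real.pi) ^ 2)⁻¹ *
    ∫ t in (0 : ℝ)..1, (g (s * t) - (1 - t) * g 0 - t * g s) / (t * (1 - t))

lemma abs_sub_le_sub_of_abs_deriv_le_deriv {φ ψ : ℝ → ℝ} {a b : ℝ} (hab : a ≤ b)
    (hφ : ContinuousOn φ (Icc a b)) (hψ : ContinuousOn ψ (Icc a b))
    (hd : ∀ x ∈ Ioo a b,
      DifferentiableAt ℝ φ x ∧ DifferentiableAt ℝ ψ x ∧ |deriv ψ x| ≤ deriv φ x) :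
    |ψ b - ψ a| ≤ φ b - φ a := by
  have key : ∀ c : ℝ, |c| ≤ 1 → c * (ψ b - ψ a) ≤ φ b - φ a := by
    intro c hc
    have hmono : MonotoneOn (fun x => φ x - c * ψ x) (Icc a b) := by
      refine monotoneOn_of_deriv_nonneg (convex_Icc a b) (hφ.sub (hψ.const_smul c)) ?_ ?_ <;>
        rw [interior_Icc] <;> intro x hx <;> obtain ⟨hφx, hψx, hψφ⟩ := hd x hx
      · exact (hφx.sub (hψx.const_mul c)).differentiableWithinAt
      · have : c * deriv ψ x ≤ |deriv ψ x| := by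
          calc c * deriv ψ x ≤ |c * deriv ψ x| := le_abs_self _
            _ ≤ |deriv ψ x| := by
              rw [abs_mul]; exact mul_le_of_le_one_left (abs_nonneg _) hc
        rw [deriv_fun_sub hφx (hψx.const_mul c), deriv_const_mul c hψx]
        linarith
    have := hmono ⟨le_rfl, hab⟩ ⟨hab, le_rfl⟩ hab
    simp only at this
    linarith
  rw [abs_le]
  constructor
  · linarith [key (-1) (by norm_num)]
  · linarith [key 1 (by norm_num)]

section HolderOfDerivBound

variable {g : ℝ → ℝ} {x₀ M κ a b : ℝ}

lemma abs_sub_le_rpow_of_abs_deriv_le_right (hκ0 : 0 < κ) (hκ1 : κ ≤ 1) (hM : 0 ≤ M)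
    (hg : Continuous g)
    (hd : ∀ x ≠ x₀, DifferentiableAt ℝ g x ∧ |deriv g x| ≤ M * |x - x₀| ^ (κ - 1))
    (hx₀a : x₀ ≤ a) (hab : a ≤ b) :
    |g b - g a| ≤ M / κ * (b - a) ^ κ := by
  have hφ : ∀ x, x₀ < x →
      HasDerivAt (fun x => M / κ * (x - x₀) ^ κ) (M * |x - x₀| ^ (κ - 1)) x := by
    intro x hx
    refine (((Real.hasDerivAt_rpow_const (p := κ) (Or.inl (sub_pos.2 hx).ne')).comp x
      ((hasDerivAt_id x).sub_const x₀)).const_mul (M / κ)).congr_deriv ?_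
    rw [abs_of_pos (sub_pos.2 hx)]
    field_simp
  calc |g b - g a| ≤ M / κ * (b - x₀) ^ κ - M / κ * (a - x₀) ^ κ := by
        refine abs_sub_le_sub_of_abs_deriv_le_deriv (φ := fun x => M / κ * (x - x₀) ^ κ) hab
          (continuous_const.mul ((continuous_sub_right x₀).rpow_const
            fun _ => Or.inr hκ0.le)).continuousOn hg.continuousOn fun x hx => ?_
        have hx₀x : x₀ < x := hx₀a.trans_lt hx.1
        refine ⟨(hφ x hx₀x).differentiableAt, (hd x hx₀x.ne').1, ?_⟩
        rw [(hφ x hx₀x).deriv]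
        exact (hd x hx₀x.ne').2
    _ ≤ M / κ * (b - a) ^ κ := by
        have := Real.rpow_add_le_add_rpow (sub_nonneg.2 hab) (sub_nonneg.2 hx₀a) hκ0.le hκ1
        rw [sub_add_sub_cancel] at this
        rw [← mul_sub]
        gcongr
        linarith

lemma abs_sub_le_rpow_of_abs_deriv_le_left (hκ0 : 0 < κ) (hκ1 : κ ≤ 1) (hM : 0 ≤ M)
    (hg : Continuous g)
    (hd : ∀ x ≠ x₀, DifferentiableAt ℝ g x ∧ |deriv g x| ≤ M * |x - x₀| ^ (κ - 1))
    (hab : a ≤ b) (hbx₀ : b ≤ x₀) :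
    |g b - g a| ≤ M / κ * (b - a) ^ κ := by
  have hd_neg : ∀ x ≠ -x₀, DifferentiableAt ℝ (fun x => g (-x)) x ∧
      |deriv (fun x => g (-x)) x| ≤ M * |x - -x₀| ^ (κ - 1) := by
    intro x hx
    obtain ⟨hdx, hbx⟩ := hd (-x) fun h => hx (by rw [← h, neg_neg])
    refine ⟨hdx.comp x differentiableAt_id.neg, ?_⟩
    rw [deriv_comp_neg, abs_neg, ← abs_neg (x - -x₀)]
    convert hbx using 4
    ring
  have := abs_sub_le_rpow_of_abs_deriv_le_right hκ0 hκ1 hM (hg.comp continuous_neg) hd_neg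
    (neg_le_neg hbx₀) (neg_le_neg hab)
  simp only [Function.comp_apply, neg_neg, neg_sub_neg] at this
  rwa [abs_sub_comm]

lemma abs_sub_le_two_mul_rpow_of_abs_deriv_le (hκ0 : 0 < κ) (hκ1 : κ ≤ 1) (hM : 0 ≤ M)
    (hg : Continuous g)
    (hd : ∀ x ≠ x₀, DifferentiableAt ℝ g x ∧ |deriv g x| ≤ M * |x - x₀| ^ (κ - 1))
    (a b : ℝ) :
    |g b - g a| ≤ 2 * M / κ * |b - a| ^ κ := by
  wlog hab : a ≤ b generalizing a b
  · rw [abs_sub_comm, abs_sub_comm b]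
    exact this b a (le_of_not_ge hab)
  rw [abs_of_nonneg (sub_nonneg.2 hab)]
  have hsplit : 2 * M / κ * (b - a) ^ κ = M / κ * (b - a) ^ κ + M / κ * (b - a) ^ κ := by ring
  have hnonneg : 0 ≤ M / κ * (b - a) ^ κ := by
    have := sub_nonneg.2 hab
    positivity
  rcases le_total x₀ a with hx₀a | hax₀
  · linarith [abs_sub_le_rpow_of_abs_deriv_le_right hκ0 hκ1 hM hg hd hx₀a hab]
  rcases le_total b x₀ with hbx₀ | hx₀b
  · linarith [abs_sub_le_rpow_of_abs_deriv_le_left hκ0 hκ1 hM hg hd hab hbx₀]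
  calc |g b - g a| ≤ |g b - g x₀| + |g x₀ - g a| := abs_sub_le _ _ _
    _ ≤ M / κ * (b - x₀) ^ κ + M / κ * (x₀ - a) ^ κ :=
        add_le_add (abs_sub_le_rpow_of_abs_deriv_le_right hκ0 hκ1 hM hg hd le_rfl hx₀b)
          (abs_sub_le_rpow_of_abs_deriv_le_left hκ0 hκ1 hM hg hd hax₀ le_rfl)
    _ ≤ M / κ * (b - a) ^ κ + M / κ * (b - a) ^ κ := by
        gcongr ?_ + ?_ <;> gcongr
    _ = 2 * M / κ * (b - a) ^ κ := hsplit.symm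

end HolderOfDerivBound

lemma le_mul_mul_of_le_mul_mul_self {A c p q : ℝ} (hc : 0 ≤ c) (hp : 0 ≤ p) (hq : 0 ≤ q)
    (hAp : A ≤ c * (p * p)) (hAq : A ≤ c * (q * q)) : A ≤ c * (p * q) := by
  rcases le_total p q with h | h
  · exact hAp.trans (by gcongr)
  · exact hAq.trans (by gcongr)

lemma abs_sub_le_rpow_half_of_holder_of_abs_sub_le {g : ℝ → ℝ} {H κ ρ : ℝ} (hH : 0 ≤ H)
    (hρ : 0 ≤ ρ) (hholder : ∀ a b, |g b - g a| ≤ H * |b - a| ^ κ)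
    (hosc : ∀ a b, |g b - g a| ≤ H * (ρ * ρ)) (a b : ℝ) :
    |g b - g a| ≤ H * ρ * |b - a| ^ (κ / 2) := by
  have hsq : |b - a| ^ (κ / 2) * |b - a| ^ (κ / 2) = |b - a| ^ κ := by
    rw [Real.rpow_div_two_eq_sqrt _ (abs_nonneg _),
      ← Real.mul_rpow (Real.sqrt_nonneg _) (Real.sqrt_nonneg _),
      Real.mul_self_sqrt (abs_nonneg _)]
  rw [mul_assoc, mul_comm ρ]
  refine le_mul_mul_of_le_mul_mul_self hH (by positivity) hρ ?_ (hosc a b)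
  rw [hsq]
  exact hholder a b

lemma intervalIntegrable_one_sub_rpow {r : ℝ} (hr : -1 < r) :
    IntervalIntegrable (fun t : ℝ => (1 - t) ^ r) volume 0 1 := by
  simpa using
    ((intervalIntegral.intervalIntegrable_rpow' (a := 0) (b := 1) hr).comp_sub_left 1).symm

lemma intervalIntegrable_rpow_sub_one_add {α : ℝ} (hα : 0 < α) :
    IntervalIntegrable (fun t : ℝ => t ^ (α - 1) + (1 - t) ^ (α - 1)) volume 0 1 :=
  (intervalIntegral.intervalIntegrable_rpow' (by linarith)).add
    (intervalIntegrable_one_sub_rpow (by linarith))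

lemma integral_rpow_sub_one_add {α : ℝ} (hα : 0 < α) :
    ∫ t in (0 : ℝ)..1, (t ^ (α - 1) + (1 - t) ^ (α - 1)) = 2 / α := by
  have hint : ∫ t in (0 : ℝ)..1, t ^ (α - 1) = 1 / α := by
    rw [integral_rpow (Or.inl (by linarith)), sub_add_cancel, Real.one_rpow,
      Real.zero_rpow hα.ne', sub_zero]
  rw [intervalIntegral.integral_add (intervalIntegral.intervalIntegrable_rpow' (by linarith))
      (intervalIntegrable_one_sub_rpow (by linarith)),
    intervalIntegral.integral_comp_sub_left (fun t => t ^ (α - 1)), sub_self, sub_zero, hint]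
  ring

section CouAOfHolder

variable {g : ℝ → ℝ} {K α : ℝ}

lemma abs_couA_integrand_le (hK : 0 ≤ K) (hholder : ∀ a b, |g b - g a| ≤ K * |b - a| ^ α)
    {s t : ℝ} (ht : t ∈ Ioc (0 : ℝ) 1) :
    |(g (s * t) - (1 - t) * g 0 - t * g s) / (t * (1 - t))| ≤
      K * |s| ^ α * (t ^ (α - 1) + (1 - t) ^ (α - 1)) := by
  obtain ⟨ht0, ht1⟩ := ht
  rcases ht1.eq_or_lt with rfl | ht1
  · simp only [sub_self, mul_zero, div_zero, abs_zero]
    positivity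
  have h1t : 0 < 1 - t := sub_pos.2 ht1
  have hsplit : (g (s * t) - (1 - t) * g 0 - t * g s) / (t * (1 - t)) =
      (g (s * t) - g 0) / t + (g (s * t) - g s) / (1 - t) := by
    field_simp
    ring
  have hleft : |g (s * t) - g 0| ≤ K * |s| ^ α * t ^ α := by
    have := hholder 0 (s * t)
    rwa [sub_zero, abs_mul, abs_of_pos ht0, Real.mul_rpow (abs_nonneg s) ht0.le, ← mul_assoc]
      at this
  have hright : |g (s * t) - g s| ≤ K * |s| ^ α * (1 - t) ^ α := by
    have := hholder s (s * t)
    rwa [show s * t - s = -(s * (1 - t)) by ring, abs_neg, abs_mul, abs_of_pos h1t,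
      Real.mul_rpow (abs_nonneg s) h1t.le, ← mul_assoc] at this
  rw [hsplit, Real.rpow_sub_one ht0.ne', Real.rpow_sub_one h1t.ne']
  calc |(g (s * t) - g 0) / t + (g (s * t) - g s) / (1 - t)|
      ≤ |g (s * t) - g 0| / t + |g (s * t) - g s| / (1 - t) :=
        (abs_add_le _ _).trans_eq (by rw [abs_div, abs_div, abs_of_pos ht0, abs_of_pos h1t])
    _ ≤ K * |s| ^ α * t ^ α / t + K * |s| ^ α * (1 - t) ^ α / (1 - t) := by gcongr
    _ = K * |s| ^ α * (t ^ α / t + (1 - t) ^ α / (1 - t)) := by ring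

lemma abs_couA_le_of_holder (hα : 0 < α) (hK : 0 ≤ K)
    (hholder : ∀ a b, |g b - g a| ≤ K * |b - a| ^ α) (s : ℝ) :
    |couA g s| ≤ 2 / α * K * |s| ^ α := by
  have hπ : ((2 * Real.pi) ^ 2)⁻¹ ≤ 1 := inv_le_one_of_one_le₀ (by nlinarith [Real.pi_gt_three])
  have hint : ‖∫ t in (0 : ℝ)..1, (g (s * t) - (1 - t) * g 0 - t * g s) / (t * (1 - t))‖ ≤
      ∫ t in (0 : ℝ)..1, K * |s| ^ α * (t ^ (α - 1) + (1 - t) ^ (α - 1)) :=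
    intervalIntegral.norm_integral_le_of_norm_le zero_le_one
      (ae_of_all _ fun t ht => abs_couA_integrand_le hK hholder ht)
      ((intervalIntegrable_rpow_sub_one_add hα).const_mul (K * |s| ^ α))
  rw [Real.norm_eq_abs, intervalIntegral.integral_const_mul, integral_rpow_sub_one_add hα] at hint
  rw [couA, abs_mul, abs_of_pos (by positivity)]
  calc ((2 * Real.pi) ^ 2)⁻¹ * |∫ t in (0 : ℝ)..1,
        (g (s * t) - (1 - t) * g 0 - t * g s) / (t * (1 - t))|
      ≤ K * |s| ^ α * (2 / α) := (mul_le_of_le_one_left (abs_nonneg _) hπ).trans hint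
    _ = 2 / α * K * |s| ^ α := by ring

end CouAOfHolder

section DecayBounds

variable {g : ℝ → ℝ} {x₀ R M γ : ℝ}

lemma abs_deriv_le_rpow_of_decay {κ : ℝ} (hR1 : R ≤ 1) (hM : 0 ≤ M) (hκγ : κ ≤ γ)
    (hbound : ∀ x ≠ x₀, |x - x₀| < R → |deriv g x| ≤ M * |x - x₀| ^ (γ - 1))
    (hzero : ∀ x ≠ x₀, R ≤ |x - x₀| → deriv g x = 0) {x : ℝ} (hx : x ≠ x₀) :
    |deriv g x| ≤ M * |x - x₀| ^ (κ - 1) := by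
  rcases lt_or_ge |x - x₀| R with hxR | hxR
  · refine (hbound x hx hxR).trans (mul_le_mul_of_nonneg_left ?_ hM)
    exact Real.rpow_le_rpow_of_exponent_ge (abs_pos.2 (sub_ne_zero.2 hx)) (hxR.le.trans hR1)
      (by linarith)
  · rw [hzero x hx hxR, abs_zero]
    positivity

lemma abs_le_mul_rpow_of_decay (hR : 0 ≤ R) (hM : 0 ≤ M) (hγ : 0 ≤ γ)
    (hbound : ∀ x ≠ x₀, |x - x₀| < R → |g x| ≤ M * |x - x₀| ^ γ)
    (hzero : ∀ x ≠ x₀, R ≤ |x - x₀| → g x = 0) {x : ℝ} (hx : x ≠ x₀) :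
    |g x| ≤ M * R ^ γ := by
  rcases lt_or_ge |x - x₀| R with hxR | hxR
  · exact (hbound x hx hxR).trans (by gcongr)
  · rw [hzero x hx hxR, abs_zero]
    positivity

end DecayBounds

lemma abs_le_of_forall_ne {g : ℝ → ℝ} {x₀ c : ℝ} (hg : Continuous g)
    (h : ∀ x ≠ x₀, |g x| ≤ c) (x : ℝ) : |g x| ≤ c := by
  rcases eq_or_ne x x₀ with rfl | hx
  · exact le_of_tendsto ((hg.abs.tendsto x).mono_left nhdsWithin_le_nhds)
      (eventually_nhdsWithin_of_forall (s := {x}ᶜ) h)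
  · exact h x hx

/-- Suppose `g ∈ C¹(ℝ∖{x₀}) ∩ C(ℝ)` is supported in `[x₀ - R, x₀ + R]`
with `0 < R ≤ 1` and satisfies `|g⁽ᵏ⁾(x)| ≤ M |x - x₀|^{γ-k} χ_R(x - x₀)` for `k = 0, 1`
and `x ≠ x₀`, for some `γ > 0` (so `M` bounds `⟦g⟧₁`).  Then for every real `s`,
`|𝔄(g; s)| ≤ C |s|^{κ/2} R^{γ/2} M` with `κ = min{1, γ}` and `C` depending only on `γ`. -/
theorem statement11 (γ : ℝ) (hγ : 0 < γ) :
    ∃ C : ℝ, 0 < C ∧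
      ∀ (g : ℝ → ℝ) (x₀ R M : ℝ), 0 < R → R ≤ 1 → 0 ≤ M →
        Continuous g → ContDiffOn ℝ 1 g {x₀}ᶜ →
        Function.support g ⊆ Set.Icc (x₀ - R) (x₀ + R) →
        (∀ k ≤ 1, ∀ x ≠ x₀, |x - x₀| < R →
          |iteratedDeriv k g x| ≤ M * |x - x₀| ^ (γ - (k : ℝ))) →
        (∀ k ≤ 1, ∀ x ≠ x₀, R ≤ |x - x₀| → iteratedDeriv k g x = 0) →
        ∀ s : ℝ, |couA g s| ≤ C * |s| ^ (min 1 γ / 2) * R ^ (γ / 2) * M := by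
  set κ := min 1 γ
  have hκ0 : 0 < κ := lt_min one_pos hγ
  have hκ1 : κ ≤ 1 := min_le_left _ _
  refine ⟨8 / κ ^ 2, by positivity, ?_⟩
  intro g x₀ R M hR hR1 hM hg hC1 _ hbound hzero s
  have hd : ∀ x ≠ x₀, DifferentiableAt ℝ g x ∧ |deriv g x| ≤ M * |x - x₀| ^ (κ - 1) :=
    fun x hx => ⟨(hC1.contDiffAt (isOpen_compl_singleton.mem_nhds hx)).differentiableAt
        one_ne_zero,
      abs_deriv_le_rpow_of_decay hR1 hM (min_le_right _ _)
        (fun y hy hyR => by simpa using hbound 1 le_rfl y hy hyR)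
        (fun y hy hyR => by simpa using hzero 1 le_rfl y hy hyR) hx⟩
  have hsup : ∀ x, |g x| ≤ M * R ^ γ := abs_le_of_forall_ne hg fun x hx =>
    abs_le_mul_rpow_of_decay hR.le hM hγ.le
      (fun y hy hyR => by simpa using hbound 0 zero_le_one y hy hyR)
      (fun y hy hyR => by simpa using hzero 0 zero_le_one y hy hyR) hx
  have hosc : ∀ a b, |g b - g a| ≤ 2 * M / κ * (R ^ (γ / 2) * R ^ (γ / 2)) := fun a b =>
    calc |g b - g a| ≤ |g b| + |g a| := abs_sub _ _
      _ ≤ 2 * M * R ^ γ := by linarith [hsup a, hsup b]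
      _ ≤ 2 * M / κ * R ^ γ := by gcongr; exact le_div_self (by positivity) hκ0 hκ1
      _ = 2 * M / κ * (R ^ (γ / 2) * R ^ (γ / 2)) := by rw [← Real.rpow_add hR, add_halves]
  have hholder := abs_sub_le_rpow_half_of_holder_of_abs_sub_le (by positivity) (by positivity)
    (abs_sub_le_two_mul_rpow_of_abs_deriv_le hκ0 hκ1 hM hg hd) hosc
  calc |couA g s| ≤ 2 / (κ / 2) * (2 * M / κ * R ^ (γ / 2)) * |s| ^ (κ / 2) :=
        abs_couA_le_of_holder (by positivity) (by positivity) hholder s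
    _ = 8 / κ ^ 2 * |s| ^ (κ / 2) * R ^ (γ / 2) * M := by
        field_simp
        ring

end
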